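/- arXiv:0808.1201 — 2 statements merged into one kernel-verified Lean document; each statement's English description precedes it below -/
import Mathlib

section
/- On the 6-dimensional nilpotent Lie algebra with de¹ = de² = de³ = de⁴ = 0, de⁵ = e¹∧e³ − e²∧e⁴, de⁶ = −2e¹∧e² + e¹∧e⁴ + e²∧e³ + 2e³∧e⁴, the form F = e¹∧e² + e³∧e⁴ + e⁵∧e⁶ satisfies d(F∧F) = 0, and dF = e¹∧e³∧e⁶ − e²∧e⁴∧e⁶ + 2e¹∧e²∧e⁵ − e¹∧e⁴∧e⁵ − e²∧e³∧e⁵ − 2e³∧e⁴∧e⁵ ≠ 0. -/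
/-- The generators `e¹, …, e⁶` (0-indexed) of the exterior algebra of the dual
of a 6-dimensional Lie algebra. -/
noncomputable def E : Fin 6 → ExteriorAlgebra ℝ (Fin 6 → ℝ) :=
  fun i => ExteriorAlgebra.ι ℝ (Pi.single i 1)

lemma Esq (i : Fin 6) : E i * E i = 0 := ExteriorAlgebra.ι_sq_zero _

lemma Esq' (i : Fin 6) (x : ExteriorAlgebra ℝ (Fin 6 → ℝ)) : E i * (E i * x) = 0 := by
  rw [← mul_assoc, Esq, zero_mul]

lemma Esw (i j : Fin 6) (_h : j < i) : E i * E j = -(E j * E i) :=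
  eq_neg_of_add_eq_zero_left (ExteriorAlgebra.ι_add_mul_swap _ _)

lemma Esw' (i j : Fin 6) (x : ExteriorAlgebra ℝ (Fin 6 → ℝ)) (h : j < i) :
    E i * (E j * x) = -(E j * (E i * x)) := by
  rw [← mul_assoc, Esw i j h, neg_mul, mul_assoc]

open ExteriorAlgebra in
/-- A linear functional on the exterior algebra extracting the coefficient of
`e⁰ ∧ e² ∧ e⁵` in degree 3. -/
noncomputable def phiAux : ExteriorAlgebra ℝ (Fin 6 → ℝ) →ₗ[ℝ] ℝ :=
  liftAlternating (Function.update
    (fun i => (0 : (Fin 6 → ℝ) [⋀^Fin i]→ₗ[ℝ] ℝ)) 3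
    ((Matrix.detRowAlternating (R := ℝ) (n := Fin 3)).compLinearMap
      (LinearMap.pi fun j : Fin 3 => LinearMap.proj (![0, 2, 5] j : Fin 6))))

open ExteriorAlgebra in
lemma phiAux_apply (a b c : Fin 6 → ℝ) :
    phiAux (ι ℝ a * (ι ℝ b * ι ℝ c))
      = Matrix.det !![a 0, a 2, a 5; b 0, b 2, b 5; c 0, c 2, c 5] := by
  rw [phiAux, liftAlternating_ι_mul, liftAlternating_ι_mul, liftAlternating_ι,
    Function.update_self]
  show (Matrix.detRowAlternating.compLinearMap
      (LinearMap.pi fun j : Fin 3 => LinearMap.proj (![0, 2, 5] j : Fin 6))) ![a, b, c] = _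
  rw [AlternatingMap.compLinearMap_apply]
  congr 1
  funext i j
  fin_cases i <;> fin_cases j <;> rfl

lemma phiAux_val : phiAux (E 0 * E 2 * E 5 - E 1 * E 3 * E 5 + (2 : ℝ) • (E 0 * E 1 * E 4)
    - E 0 * E 3 * E 4 - E 1 * E 2 * E 4 - (2 : ℝ) • (E 2 * E 3 * E 4)) = 1 := by
  simp only [map_sub, map_add, map_smul, mul_assoc, E, phiAux_apply]
  simp (config := { decide := true }) [Matrix.det_fin_three, Pi.single_apply]

set_option maxHeartbeats 1600000 in
/-- On the 6-dimensional nilpotent Lie algebra with `de¹ = ⋯ = de⁴ = 0`,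
`de⁵ = e¹∧e³ − e²∧e⁴`, `de⁶ = −2e¹∧e² + e¹∧e⁴ + e²∧e³ + 2e³∧e⁴`
(isomorphic to `h₂`), the form `F = e¹∧e² + e³∧e⁴ + e⁵∧e⁶` satisfies
`d(F∧F) = 0` and
`dF = e¹∧e³∧e⁶ − e²∧e⁴∧e⁶ + 2e¹∧e²∧e⁵ − e¹∧e⁴∧e⁵ − e²∧e³∧e⁵ − 2e³∧e⁴∧e⁵ ≠ 0`. -/
theorem h2_balanced
    (d : ExteriorAlgebra ℝ (Fin 6 → ℝ) →ₗ[ℝ] ExteriorAlgebra ℝ (Fin 6 → ℝ))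
    (hd1 : d 1 = 0)
    (hLeib : ∀ (v : Fin 6 → ℝ) (x : ExteriorAlgebra ℝ (Fin 6 → ℝ)),
      d (ExteriorAlgebra.ι ℝ v * x)
        = d (ExteriorAlgebra.ι ℝ v) * x - ExteriorAlgebra.ι ℝ v * d x)
    (h1 : d (E 0) = 0) (h2 : d (E 1) = 0) (h3 : d (E 2) = 0) (h4 : d (E 3) = 0)
    (h5 : d (E 4) = E 0 * E 2 - E 1 * E 3)
    (h6 : d (E 5) = -((2 : ℝ) • (E 0 * E 1)) + E 0 * E 3 + E 1 * E 2
            + (2 : ℝ) • (E 2 * E 3)) :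
    d ((E 0 * E 1 + E 2 * E 3 + E 4 * E 5) * (E 0 * E 1 + E 2 * E 3 + E 4 * E 5)) = 0 ∧
    d (E 0 * E 1 + E 2 * E 3 + E 4 * E 5)
      = E 0 * E 2 * E 5 - E 1 * E 3 * E 5 + (2 : ℝ) • (E 0 * E 1 * E 4)
        - E 0 * E 3 * E 4 - E 1 * E 2 * E 4 - (2 : ℝ) • (E 2 * E 3 * E 4) ∧
    d (E 0 * E 1 + E 2 * E 3 + E 4 * E 5) ≠ 0 := by
  have hL : ∀ (i : Fin 6) x, d (E i * x) = d (E i) * x - E i * d x := fun i x => hLeib _ x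
  have key : ∀ (i j : Fin 6) (x : ExteriorAlgebra ℝ (Fin 6 → ℝ)),
      d (E i * E j * x) = d (E i * E j) * x + E i * E j * d x := by
    intro i j x
    rw [mul_assoc, hL i (E j * x), hL j x, hL i (E j)]
    noncomm_ring
  have hdF : d (E 0 * E 1 + E 2 * E 3 + E 4 * E 5)
      = E 0 * E 2 * E 5 - E 1 * E 3 * E 5 + (2 : ℝ) • (E 0 * E 1 * E 4)
        - E 0 * E 3 * E 4 - E 1 * E 2 * E 4 - (2 : ℝ) • (E 2 * E 3 * E 4) := by
    rw [map_add, map_add, hL 0, h1, h2, hL 2, h3, h4, hL 4, h5, h6]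
    simp (config := { decide := true }) only [zero_mul, mul_zero, sub_zero, zero_add,
      sub_mul, mul_add, mul_sub, add_mul, neg_mul, mul_neg, neg_neg,
      smul_mul_assoc, mul_smul_comm, smul_neg, mul_assoc, Esw, Esw', Esq, Esq']
    module
  have hFx : ∀ x : ExteriorAlgebra ℝ (Fin 6 → ℝ),
      d ((E 0 * E 1 + E 2 * E 3 + E 4 * E 5) * x)
        = d (E 0 * E 1 + E 2 * E 3 + E 4 * E 5) * x
          + (E 0 * E 1 + E 2 * E 3 + E 4 * E 5) * d x := by
    intro x
    rw [add_mul, add_mul, map_add, map_add, key 0 1, key 2 3, key 4 5,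
      map_add, map_add]
    noncomm_ring
  refine ⟨?_, hdF, ?_⟩
  · rw [hFx, hdF]
    simp (config := { decide := true }) only [zero_mul, mul_zero, sub_zero, zero_add,
      sub_mul, mul_add, mul_sub, add_mul, neg_mul, mul_neg, neg_neg,
      smul_mul_assoc, mul_smul_comm, smul_neg, mul_assoc, Esw, Esw', Esq, Esq']
    module
  · intro hc
    have h0 := phiAux_val
    rw [← hdF, hc, map_zero] at h0
    exact zero_ne_one h0
end

section
/- The linear change of basis f¹ = −2e² + √3 e³ + e⁴, f² = e¹ − √3 e² + 2e³, f³ = 2e² + √3 e³ − e⁴, f⁴ = e¹ + √3 e² + 2e³, f⁵ = −√3 e⁵ − e⁶, f⁶ = −√3 e⁵ + e⁶ transforms the structure equations de¹ = de² = de³ = de⁴ = 0, de⁵ = e¹∧e³ − e²∧e⁴, de⁶ = −2e¹∧e² + e¹∧e⁴ + e²∧e³ + 2e³∧e⁴ into those of h₂ = (0,0,0,0,12,34), i.e. df¹ = df² = df³ = df⁴ = 0, df⁵ = c₁ f¹∧f², df⁶ = c₂ f³∧f⁴ for some nonzero constants c₁, c₂. -/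
lemma Eswap (i j : Fin 6) : E j * E i = -(E i * E j) := by
  have := ExteriorAlgebra.ι_add_mul_swap (R := ℝ)
    (Pi.single i 1 : Fin 6 → ℝ) (Pi.single j 1 : Fin 6 → ℝ)
  simp only [E]
  linear_combination (norm := noncomm_ring) this

/-- The change of basis `f¹ = −2e² + √3 e³ + e⁴`, `f² = e¹ − √3 e² + 2e³`,
`f³ = 2e² + √3 e³ − e⁴`, `f⁴ = e¹ + √3 e² + 2e³`, `f⁵ = −√3 e⁵ − e⁶`,
`f⁶ = −√3 e⁵ + e⁶` transforms the structure equations `de¹ = ⋯ = de⁴ = 0`,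
`de⁵ = e¹∧e³ − e²∧e⁴`, `de⁶ = −2e¹∧e² + e¹∧e⁴ + e²∧e³ + 2e³∧e⁴` into those
of `h₂ = (0,0,0,0,12,34)`: `df¹ = df² = df³ = df⁴ = 0`, `df⁵ = c₁ f¹∧f²`,
`df⁶ = c₂ f³∧f⁴` for some nonzero constants `c₁, c₂`. -/
theorem change_of_basis_h2
    (d : ExteriorAlgebra ℝ (Fin 6 → ℝ) →ₗ[ℝ] ExteriorAlgebra ℝ (Fin 6 → ℝ))
    (hd1 : d 1 = 0)
    (hLeib : ∀ (v : Fin 6 → ℝ) (x : ExteriorAlgebra ℝ (Fin 6 → ℝ)),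
      d (ExteriorAlgebra.ι ℝ v * x)
        = d (ExteriorAlgebra.ι ℝ v) * x - ExteriorAlgebra.ι ℝ v * d x)
    (h1 : d (E 0) = 0) (h2 : d (E 1) = 0) (h3 : d (E 2) = 0) (h4 : d (E 3) = 0)
    (h5 : d (E 4) = E 0 * E 2 - E 1 * E 3)
    (h6 : d (E 5) = -((2 : ℝ) • (E 0 * E 1)) + E 0 * E 3 + E 1 * E 2
            + (2 : ℝ) • (E 2 * E 3))
    (f : Fin 6 → ExteriorAlgebra ℝ (Fin 6 → ℝ))
    (hf1 : f 0 = -((2 : ℝ) • E 1) + Real.sqrt 3 • E 2 + E 3)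
    (hf2 : f 1 = E 0 - Real.sqrt 3 • E 1 + (2 : ℝ) • E 2)
    (hf3 : f 2 = (2 : ℝ) • E 1 + Real.sqrt 3 • E 2 - E 3)
    (hf4 : f 3 = E 0 + Real.sqrt 3 • E 1 + (2 : ℝ) • E 2)
    (hf5 : f 4 = -(Real.sqrt 3 • E 4) - E 5)
    (hf6 : f 5 = -(Real.sqrt 3 • E 4) + E 5) :
    d (f 0) = 0 ∧ d (f 1) = 0 ∧ d (f 2) = 0 ∧ d (f 3) = 0 ∧
    ∃ c₁ c₂ : ℝ, c₁ ≠ 0 ∧ c₂ ≠ 0 ∧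
      d (f 4) = c₁ • (f 0 * f 1) ∧ d (f 5) = c₂ • (f 2 * f 3) := by
  refine ⟨?_, ?_, ?_, ?_, 1, 1, one_ne_zero, one_ne_zero, ?_, ?_⟩
  · rw [hf1]; simp [map_add, map_neg, map_smul, h1, h2, h3, h4]
  · rw [hf2]; simp [map_add, map_sub, map_smul, h1, h2, h3, h4]
  · rw [hf3]; simp [map_add, map_sub, map_smul, h1, h2, h3, h4]
  · rw [hf4]; simp [map_add, map_smul, h1, h2, h3, h4]
  · rw [hf5, map_sub, map_neg, map_smul, h5, h6, hf1, hf2, one_smul]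
    simp only [mul_add, add_mul, sub_mul, mul_sub, neg_mul, mul_neg, smul_mul_assoc,
      mul_smul_comm, Esq, Eswap 0 1, Eswap 0 2, Eswap 0 3, Eswap 1 2, Eswap 1 3, Eswap 2 3,
      smul_add, smul_sub, smul_neg, smul_smul, smul_zero, neg_zero, neg_neg]
    rw [Real.mul_self_sqrt (by norm_num)]
    module
  · rw [hf6, map_add, map_neg, map_smul, h5, h6, hf3, hf4, one_smul]
    simp only [mul_add, add_mul, sub_mul, mul_sub, neg_mul, mul_neg, smul_mul_assoc,
      mul_smul_comm, Esq, Eswap 0 1, Eswap 0 2, Eswap 0 3, Eswap 1 2, Eswap 1 3, Eswap 2 3,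
      smul_add, smul_sub, smul_neg, smul_smul, smul_zero, neg_zero, neg_neg]
    rw [Real.mul_self_sqrt (by norm_num)]
    module
end
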